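/- Let N ≥ 2 and let (ℓ, n, m_2, …, m_{N−1}) and (ℓ′, n′, m′_2, …, m′_{N−1}) be two null frames of ℝ^N whose first vectors are proportional, ℓ′ = λℓ with λ ≠ 0. Then for every p-linear form T on ℝ^N, the boost order of T with respect to the first frame equals the boost order of T with respect to the second frame. Hence the boost order of T is a function B(ℓ) of the null direction spanned by ℓ only. -/

import Mathlib

/-- The Minkowski symmetric bilinear form of signature `(-,+,…,+)` on `ℝ^N`. -/
def eta {N : ℕ} (x y : Fin N → ℝ) : ℝ :=
  ∑ a : Fin N, (if (a : ℕ) = 0 then -(x a * y a) else x a * y a)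

/-- A null frame `(ℓ, n, m_2, …, m_{N-1})` of `ℝ^N`: a basis consisting of two null
vectors `ℓ = f 0`, `n = f 1` with `η(ℓ,n) = 1` and spacelike vectors `m_i = f i`
(`2 ≤ i`) orthonormal and orthogonal to `ℓ` and `n`. -/
def IsNullFrame {N : ℕ} [NeZero N] (f : Fin N → Fin N → ℝ) : Prop :=
  LinearIndependent ℝ f ∧
  eta (f 0) (f 0) = 0 ∧ eta (f 1) (f 1) = 0 ∧ eta (f 0) (f 1) = 1 ∧
  (∀ i j : Fin N, 2 ≤ (i : ℕ) → 2 ≤ (j : ℕ) →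
      eta (f i) (f j) = if i = j then 1 else 0) ∧
  (∀ i : Fin N, 2 ≤ (i : ℕ) → eta (f 0) (f i) = 0 ∧ eta (f 1) (f i) = 0)

/-- Boost weight of a frame index: `b_0 = 1`, `b_1 = -1`, `b_i = 0` for spatial `i`. -/
def bw {N : ℕ} (A : Fin N) : ℤ :=
  if (A : ℕ) = 0 then 1 else if (A : ℕ) = 1 then -1 else 0

open scoped Classical in
/-- The boost order of a `p`-linear form `T` with respect to the frame `f`: the maximum
boost weight over all nonvanishing frame components (`⊥`, i.e. `-∞`, if all vanish). -/
noncomputable def boostOrder {N : ℕ} (p : ℕ)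
    (T : MultilinearMap ℝ (fun _ : Fin p => (Fin N → ℝ)) ℝ)
    (f : Fin N → Fin N → ℝ) : WithBot ℤ :=
  Finset.univ.sup fun A : Fin p → Fin N =>
    if T (fun k => f (A k)) = 0 then ⊥ else ((∑ k, bw (A k) : ℤ) : WithBot ℤ)

/-! Expand the second frame in the first, `g_A = ∑_B c_{AB} f_B`. Since `g_0 = λ f_0`, and since
`η(f_0, ·)` reads off the `f_1`-coefficient while `η(f_0, g_i) = λ⁻¹ η(g_0, g_i) = 0` for spatial
`i`, every nonzero `c_{AB}` has `b_A ≤ b_B`. By multilinearity each component of `T` in the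
frame `g` is then a combination of components in the frame `f` of no smaller boost weight, so
the boost order cannot increase; exchanging the roles of the frames gives equality. -/

lemma eta_smul_left {N : ℕ} (c : ℝ) (x y : Fin N → ℝ) : eta (c • x) y = c * eta x y := by
  simp only [eta, Finset.mul_sum, Pi.smul_apply, smul_eq_mul]
  refine Finset.sum_congr rfl fun a _ => ?_
  split_ifs <;> ring

lemma eta_sum_smul_right {N : ℕ} (x : Fin N → ℝ) (c : Fin N → ℝ) (v : Fin N → Fin N → ℝ) :
    eta x (∑ B, c B • v B) = ∑ B, c B * eta x (v B) := by
  simp only [eta, Finset.mul_sum]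
  rw [Finset.sum_comm]
  refine Finset.sum_congr rfl fun a _ => ?_
  simp only [Finset.sum_apply, Pi.smul_apply, smul_eq_mul, Finset.mul_sum]
  split_ifs
  · rw [← Finset.sum_neg_distrib]
    exact Finset.sum_congr rfl fun B _ => by ring
  · exact Finset.sum_congr rfl fun B _ => by ring

section BoostWeight

variable {N : ℕ}

lemma Fin.val_one_of_two_le [NeZero N] (hN : 2 ≤ N) : ((1 : Fin N) : ℕ) = 1 := by
  rw [Fin.val_one', Nat.mod_eq_of_lt hN]

lemma Fin.ne_one_of_val_ne_one [NeZero N] (hN : 2 ≤ N) {A : Fin N} (hA : (A : ℕ) ≠ 1) :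
    A ≠ 1 :=
  fun h => hA (h ▸ Fin.val_one_of_two_le hN)

lemma Fin.eq_zero_or_eq_one_or_two_le [NeZero N] (hN : 2 ≤ N) (A : Fin N) :
    A = 0 ∨ A = 1 ∨ 2 ≤ (A : ℕ) := by
  rcases Nat.lt_or_ge (A : ℕ) 2 with h | h
  · interval_cases hA : (A : ℕ)
    · exact Or.inl (Fin.ext hA)
    · exact Or.inr (Or.inl (Fin.ext (by rw [hA, Fin.val_one_of_two_le hN])))
  · exact Or.inr (Or.inr h)

lemma bw_zero [NeZero N] : bw (0 : Fin N) = 1 := by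
  simp [bw]

lemma bw_one [NeZero N] (hN : 2 ≤ N) : bw (1 : Fin N) = -1 := by
  rw [bw, Fin.val_one_of_two_le hN]
  norm_num

lemma bw_of_two_le {A : Fin N} (hA : 2 ≤ (A : ℕ)) : bw A = 0 := by
  simp only [bw]
  split_ifs <;> omega

lemma neg_one_le_bw (A : Fin N) : -1 ≤ bw A := by
  simp only [bw]
  split_ifs <;> omega

end BoostWeight

section BoostOrder

variable {N p : ℕ} (T : MultilinearMap ℝ (fun _ : Fin p => (Fin N → ℝ)) ℝ)

lemma le_boostOrder (f : Fin N → Fin N → ℝ) {A : Fin p → Fin N}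
    (hA : T (fun k => f (A k)) ≠ 0) :
    ((∑ k, bw (A k) : ℤ) : WithBot ℤ) ≤ boostOrder p T f := by
  classical
  refine le_trans ?_ (Finset.le_sup (Finset.mem_univ A))
  simp [hA]

lemma boostOrder_le (f : Fin N → Fin N → ℝ) {b : WithBot ℤ}
    (h : ∀ A : Fin p → Fin N, T (fun k => f (A k)) ≠ 0 →
      ((∑ k, bw (A k) : ℤ) : WithBot ℤ) ≤ b) :
    boostOrder p T f ≤ b := by
  classical
  refine Finset.sup_le fun A _ => ?_
  split_ifs with hA
  · exact bot_le
  · exact h A hA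

lemma boostOrder_le_of_eq_sum (f g c : Fin N → Fin N → ℝ) (hg : ∀ A, g A = ∑ B, c A B • f B)
    (hc : ∀ A B, c A B ≠ 0 → bw A ≤ bw B) : boostOrder p T g ≤ boostOrder p T f := by
  classical
  refine boostOrder_le T g fun A hA => ?_
  have hexpand : T (fun k => g (A k)) =
      ∑ D : Fin p → Fin N, (∏ k, c (A k) (D k)) • T (fun k => f (D k)) := by
    simp only [hg, T.map_sum, T.map_smul_univ]
  rw [hexpand] at hA
  obtain ⟨D, -, hD⟩ := Finset.exists_ne_zero_of_sum_ne_zero hA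
  have hprod : ∏ k, c (A k) (D k) ≠ 0 := fun h => hD (by simp [h])
  have hTD : T (fun k => f (D k)) ≠ 0 := fun h => hD (by simp [h])
  have hweight : ∑ k, bw (A k) ≤ ∑ k, bw (D k) :=
    Finset.sum_le_sum fun k _ => hc _ _ (Finset.prod_ne_zero_iff.1 hprod k (Finset.mem_univ k))
  exact (WithBot.coe_le_coe.2 hweight).trans (le_boostOrder T f hTD)

end BoostOrder

namespace IsNullFrame

variable {N : ℕ} [NeZero N] {f g : Fin N → Fin N → ℝ}

lemma two_le (hf : IsNullFrame f) : 2 ≤ N := by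
  by_contra! hN
  have : Subsingleton (Fin N) := Fin.subsingleton_iff_le_one.2 (by omega)
  have h := hf.2.2.2.1
  rw [Subsingleton.elim (1 : Fin N) 0, hf.2.1] at h
  exact zero_ne_one h

noncomputable def basis (hf : IsNullFrame f) : Module.Basis (Fin N) ℝ (Fin N → ℝ) :=
  basisOfLinearIndependentOfCardEqFinrank hf.1 (by simp)

@[simp]
lemma coe_basis (hf : IsNullFrame f) : ⇑hf.basis = f :=
  coe_basisOfLinearIndependentOfCardEqFinrank _ _

lemma eq_sum_repr (hf : IsNullFrame f) (x : Fin N → ℝ) : x = ∑ B, hf.basis.repr x B • f B := by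
  simpa using (hf.basis.sum_repr x).symm

lemma eta_zero_apply (hf : IsNullFrame f) (B : Fin N) :
    eta (f 0) (f B) = if B = 1 then 1 else 0 := by
  have hN := hf.two_le
  rcases Fin.eq_zero_or_eq_one_or_two_le hN B with rfl | rfl | hB
  · rw [hf.2.1, if_neg (Fin.ne_one_of_val_ne_one hN (by simp))]
  · rw [hf.2.2.2.1, if_pos rfl]
  · rw [(hf.2.2.2.2.2 B hB).1, if_neg (Fin.ne_one_of_val_ne_one hN (by omega))]

lemma eta_zero_eq_repr_one (hf : IsNullFrame f) (x : Fin N → ℝ) :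
    eta (f 0) x = hf.basis.repr x 1 := by
  conv_lhs => rw [hf.eq_sum_repr x]
  simp [eta_sum_smul_right, hf.eta_zero_apply]

lemma bw_le_of_repr_ne_zero (hf : IsNullFrame f) (hg : IsNullFrame g) {lam : ℝ} (hlam : lam ≠ 0)
    (hprop : g 0 = lam • f 0) {A B : Fin N} (hAB : hf.basis.repr (g A) B ≠ 0) :
    bw A ≤ bw B := by
  have hN := hf.two_le
  rcases Fin.eq_zero_or_eq_one_or_two_le hN A with rfl | rfl | hA
  · obtain rfl : B = 0 := by
      by_contra hB
      refine hAB ?_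
      have hf0 : f 0 = hf.basis 0 := by simp
      rw [hprop, hf0, map_smul, Module.Basis.repr_self]
      simp [Ne.symm hB]
    exact le_rfl
  · exact (bw_one hN).trans_le (neg_one_le_bw B)
  · have hB : B ≠ 1 := by
      rintro rfl
      refine hAB ?_
      rw [← hf.eta_zero_eq_repr_one]
      have h := (hg.2.2.2.2.2 A hA).1
      rw [hprop, eta_smul_left] at h
      exact (mul_eq_zero.1 h).resolve_left hlam
    rw [bw_of_two_le hA]
    rcases Fin.eq_zero_or_eq_one_or_two_le hN B with rfl | rfl | hB'
    · simp [bw_zero]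
    · exact absurd rfl hB
    · rw [bw_of_two_le hB']

lemma boostOrder_le_of_zero_eq_smul (hf : IsNullFrame f) (hg : IsNullFrame g) {lam : ℝ}
    (hlam : lam ≠ 0) (hprop : g 0 = lam • f 0) {p : ℕ}
    (T : MultilinearMap ℝ (fun _ : Fin p => (Fin N → ℝ)) ℝ) :
    boostOrder p T g ≤ boostOrder p T f :=
  boostOrder_le_of_eq_sum T f g (fun A B => hf.basis.repr (g A) B)
    (fun A => hf.eq_sum_repr (g A)) fun _ _ => hf.bw_le_of_repr_ne_zero hg hlam hprop

end IsNullFrame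

theorem stmt_4_general (N : ℕ) [NeZero N] (p : ℕ)
    (f g : Fin N → Fin N → ℝ) (hf : IsNullFrame f) (hg : IsNullFrame g)
    (lam : ℝ) (hlam : lam ≠ 0) (hprop : g 0 = lam • f 0)
    (T : MultilinearMap ℝ (fun _ : Fin p => (Fin N → ℝ)) ℝ) :
    boostOrder p T f = boostOrder p T g := by
  have hprop' : f 0 = lam⁻¹ • g 0 := by
    rw [hprop, smul_smul, inv_mul_cancel₀ hlam, one_smul]
  exact le_antisymm (hg.boostOrder_le_of_zero_eq_smul hf (inv_ne_zero hlam) hprop' T)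
    (hf.boostOrder_le_of_zero_eq_smul hg hlam hprop T)

/-- If two null frames have proportional first vectors, `ℓ' = λℓ`
(`λ ≠ 0`), then every `p`-linear form `T` has the same boost order with respect to the
two frames: the boost order is a function of the null direction `[ℓ]` only. -/
theorem stmt_4 (N : ℕ) [NeZero N] (hN : 2 ≤ N) (p : ℕ)
    (f g : Fin N → Fin N → ℝ) (hf : IsNullFrame f) (hg : IsNullFrame g)
    (lam : ℝ) (hlam : lam ≠ 0) (hprop : g 0 = lam • f 0)
    (T : MultilinearMap ℝ (fun _ : Fin p => (Fin N → ℝ)) ℝ) :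
    boostOrder p T f = boostOrder p T g :=
  stmt_4_general N p f g hf hg lam hlam hprop T
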